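/- Let f : {0,1}^E → ℝ with E finite, |E| = dn^d, ℙ product Bernoulli(p). Assume: (i) ‖∇_e f‖_2^2 is the same for all e ∈ E; (ii) there is an event H with ℙ(H^c) ≤ exp(−c log^{3/2} n), |∇_e f| ≤ C/n^d on H, and |∇_e f| ≤ 4d everywhere. Then for n large enough, Var(f) ≤ K d n^d (C²/n^{2d} + 16d² exp(−c log^{3/2} n)) ≤ ξ/n^d for some constant ξ depending only on d, p, C, c, K, where K is the constant in Talagrand's inequality Var(f) ≤ K Σ_e ‖∇_e f‖_2^2/(1+log(‖∇_e f‖_2/‖∇_e f‖_1)). -/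

import Mathlib

/-- Bernoulli(p) product weight of a configuration `ω ∈ {0,1}^E`. -/
noncomputable def bw {E : Type*} [Fintype E] (p : ℝ) (ω : E → Bool) : ℝ :=
  ∏ e, if ω e then p else 1 - p

/-- Expectation with respect to the Bernoulli(p) product measure on `{0,1}^E`. -/
noncomputable def ev {E : Type*} [Fintype E] [DecidableEq E] (p : ℝ)
    (g : (E → Bool) → ℝ) : ℝ :=
  ∑ ω : E → Bool, bw p ω * g ω

/-- The configuration `ω^e`: `ω` with the coordinate at `e` flipped. -/
def flipAt {E : Type*} [DecidableEq E] (e : E) (ω : E → Bool) : E → Bool :=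
  Function.update ω e (!ω e)

/-- The discrete gradient `∇_e f (ω) = f(ω) - f(ω^e)`. -/
def grad {E : Type*} [DecidableEq E] (f : (E → Bool) → ℝ) (e : E)
    (ω : E → Bool) : ℝ :=
  f ω - f (flipAt e ω)

open Classical in
/-- Real-valued indicator of a proposition. -/
noncomputable def ind (P : Prop) : ℝ := if P then 1 else 0

/-- The `L¹` norm with respect to the Bernoulli(p) product measure. -/
noncomputable def L1 {E : Type*} [Fintype E] [DecidableEq E] (p : ℝ)
    (g : (E → Bool) → ℝ) : ℝ :=
  ev p (fun ω => |g ω|)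

/-- The `L²` norm with respect to the Bernoulli(p) product measure. -/
noncomputable def L2 {E : Type*} [Fintype E] [DecidableEq E] (p : ℝ)
    (g : (E → Bool) → ℝ) : ℝ :=
  Real.sqrt (ev p (fun ω => (g ω) ^ 2))

/-- Variance with respect to the Bernoulli(p) product measure. -/
noncomputable def Var {E : Type*} [Fintype E] [DecidableEq E] (p : ℝ)
    (f : (E → Bool) → ℝ) : ℝ :=
  ev p (fun ω => (f ω - ev p f) ^ 2)

section Helpers

variable {E : Type*} [Fintype E] [DecidableEq E] {p : ℝ}

omit [DecidableEq E] in
lemma bw_nonneg (hp0 : 0 ≤ p) (hp1 : p ≤ 1) (ω : E → Bool) : 0 ≤ bw p ω := by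
  refine Finset.prod_nonneg fun e _ => ?_
  split <;> linarith

lemma sum_bw (hp0 : 0 ≤ p) (hp1 : p ≤ 1) : ∑ ω : E → Bool, bw p ω = 1 := by
  unfold bw
  rw [← Fintype.piFinset_univ, ← Finset.prod_univ_sum (fun _ => (Finset.univ : Finset Bool))
      (fun _ b => if b then p else 1 - p)]
  simp

lemma ev_mono (hp0 : 0 ≤ p) (hp1 : p ≤ 1) {g h : (E → Bool) → ℝ}
    (hgh : ∀ ω, g ω ≤ h ω) : ev p g ≤ ev p h :=
  Finset.sum_le_sum fun ω _ => mul_le_mul_of_nonneg_left (hgh ω) (bw_nonneg hp0 hp1 ω)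

lemma ev_nonneg (hp0 : 0 ≤ p) (hp1 : p ≤ 1) {g : (E → Bool) → ℝ}
    (hg : ∀ ω, 0 ≤ g ω) : 0 ≤ ev p g := by
  have := ev_mono (p := p) hp0 hp1 hg
  simpa [ev] using this

lemma ev_add_const_mul (hp0 : 0 ≤ p) (hp1 : p ≤ 1) (a b : ℝ) (h : (E → Bool) → ℝ) :
    ev p (fun ω => a + b * h ω) = a + b * ev p h := by
  simp only [ev, mul_add, Finset.sum_add_distrib, ← Finset.sum_mul, sum_bw hp0 hp1,
    one_mul, Finset.mul_sum]
  congr 1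
  exact Finset.sum_congr rfl fun ω _ => by ring

lemma L1_le_L2 (hp0 : 0 ≤ p) (hp1 : p ≤ 1) (g : (E → Bool) → ℝ) :
    L1 p g ≤ L2 p g := by
  have h1 : (L1 p g) ^ 2 ≤ ev p (fun ω => (g ω) ^ 2) := by
    have hcs := Finset.sum_mul_sq_le_sq_mul_sq Finset.univ
      (fun ω : E → Bool => Real.sqrt (bw p ω))
      (fun ω : E → Bool => Real.sqrt (bw p ω) * |g ω|)
    have he : ∀ ω : E → Bool, Real.sqrt (bw p ω) * (Real.sqrt (bw p ω) * |g ω|)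
        = bw p ω * |g ω| := by
      intro ω
      rw [← mul_assoc, Real.mul_self_sqrt (bw_nonneg hp0 hp1 ω)]
    have he2 : ∀ ω : E → Bool, (Real.sqrt (bw p ω) * |g ω|) ^ 2 = bw p ω * (g ω) ^ 2 := by
      intro ω
      rw [mul_pow, Real.sq_sqrt (bw_nonneg hp0 hp1 ω), sq_abs]
    simp only [he, he2, Real.sq_sqrt (bw_nonneg hp0 hp1 _)] at hcs
    calc (L1 p g) ^ 2 ≤ (∑ ω : E → Bool, bw p ω) * ∑ ω : E → Bool, bw p ω * (g ω) ^ 2 := by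
          simpa [L1, ev] using hcs
      _ = ev p (fun ω => (g ω) ^ 2) := by rw [sum_bw hp0 hp1, one_mul]; rfl
  have hL1 : 0 ≤ L1 p g := ev_nonneg hp0 hp1 fun ω => abs_nonneg _
  calc L1 p g = Real.sqrt ((L1 p g) ^ 2) := (Real.sqrt_sq hL1).symm
    _ ≤ L2 p g := Real.sqrt_le_sqrt h1

lemma log_ratio_nonneg (hp0 : 0 ≤ p) (hp1 : p ≤ 1) (g : (E → Bool) → ℝ) :
    0 ≤ Real.log (L2 p g / L1 p g) := by
  have hL1 : 0 ≤ L1 p g := ev_nonneg hp0 hp1 fun ω => abs_nonneg _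
  rcases eq_or_lt_of_le hL1 with h | h
  · simp [← h]
  · exact Real.log_nonneg ((one_le_div h).2 (L1_le_L2 hp0 hp1 g))

end Helpers

/-- Main theorem (abstract form): for `f_n` defined on `{0,1}^{E_n}` with
`|E_n| = d n^d`, edge-transitive symmetry, gradient bounded by `C/n^d` outside
an event of probability `≤ exp(-c log^{3/2} n)` and by `4d` everywhere, and
Talagrand's inequality, the variance satisfies, for `n` large,
`Var(f_n) ≤ K d n^d (C²/n^{2d} + 16 d² e^{-c log^{3/2} n}) ≤ ξ/n^d`. -/
theorem stmt_11 (d : ℕ) (hd : 1 ≤ d) (p K C c : ℝ)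
    (hp0 : 0 ≤ p) (hp1 : p ≤ 1) (hK : 0 ≤ K) (hC : 0 ≤ C) (hc : 0 < c)
    (E : ℕ → Type) [∀ n, Fintype (E n)] [∀ n, DecidableEq (E n)]
    (hcard : ∀ n : ℕ, Fintype.card (E n) = d * n ^ d)
    (f : ∀ n : ℕ, (E n → Bool) → ℝ)
    (hsymm : ∀ n : ℕ, ∀ e e' : E n,
      ev p (fun ω => (grad (f n) e ω) ^ 2) = ev p (fun ω => (grad (f n) e' ω) ^ 2))
    (H : ∀ n : ℕ, Set (E n → Bool))
    (hHc : ∀ n : ℕ, 2 ≤ n →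
      ev p (fun ω => ind (ω ∉ H n)) ≤ Real.exp (-c * (Real.log n) ^ ((3 : ℝ) / 2)))
    (hgradH : ∀ n : ℕ, 2 ≤ n → ∀ ω ∈ H n, ∀ e : E n,
      |grad (f n) e ω| ≤ C / (n : ℝ) ^ d)
    (hgradAll : ∀ n : ℕ, ∀ ω, ∀ e : E n, |grad (f n) e ω| ≤ 4 * d)
    (hTal : ∀ n : ℕ, Var p (f n) ≤ K * ∑ e : E n, (L2 p (grad (f n) e)) ^ 2 /
      (1 + Real.log (L2 p (grad (f n) e) / L1 p (grad (f n) e)))) :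
    ∃ ξ > (0 : ℝ), ∃ N : ℕ, ∀ n : ℕ, N ≤ n →
      Var p (f n) ≤ K * d * (n : ℝ) ^ d *
          (C ^ 2 / (n : ℝ) ^ (2 * d) +
            16 * d ^ 2 * Real.exp (-c * (Real.log n) ^ ((3 : ℝ) / 2))) ∧
        Var p (f n) ≤ ξ / (n : ℝ) ^ d := by
  refine ⟨K * d * (C ^ 2 + 16 * d ^ 2) + 1, by positivity,
    ⌈Real.exp ((2 * d / c) ^ 2)⌉₊ + 2, fun n hn => ?_⟩
  have hn2 : 2 ≤ n := le_trans (Nat.le_add_left 2 _) hn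
  have hnR : (2 : ℝ) ≤ (n : ℝ) := by exact_mod_cast hn2
  have hn0 : (0 : ℝ) < (n : ℝ) := by linarith
  have hnd : (0 : ℝ) < (n : ℝ) ^ d := pow_pos hn0 d
  have hn2d : (0 : ℝ) < (n : ℝ) ^ (2 * d) := pow_pos hn0 _
  set B : ℝ := C ^ 2 / (n : ℝ) ^ (2 * d) +
      16 * d ^ 2 * Real.exp (-c * (Real.log n) ^ ((3 : ℝ) / 2)) with hB
  have hexp_nonneg : (0 : ℝ) ≤ Real.exp (-c * (Real.log n) ^ ((3 : ℝ) / 2)) :=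
    le_of_lt (Real.exp_pos _)
  -- pointwise bound on the squared gradient
  have hpt : ∀ e : E n, ∀ ω : E n → Bool,
      (grad (f n) e ω) ^ 2 ≤ C ^ 2 / (n : ℝ) ^ (2 * d) + 16 * d ^ 2 * ind (ω ∉ H n) := by
    intro e ω
    by_cases hω : ω ∈ H n
    · have h1 : |grad (f n) e ω| ≤ C / (n : ℝ) ^ d := hgradH n hn2 ω hω e
      have h2 : (grad (f n) e ω) ^ 2 ≤ (C / (n : ℝ) ^ d) ^ 2 := by
        rw [← sq_abs]
        exact pow_le_pow_left₀ (abs_nonneg _) h1 2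
      have h3 : (C / (n : ℝ) ^ d) ^ 2 = C ^ 2 / (n : ℝ) ^ (2 * d) := by
        rw [div_pow, ← pow_mul, mul_comm d 2]
      have h4 : ind (ω ∉ H n) = 0 := by simp [ind, hω]
      rw [h4]
      linarith [h2, h3]
    · have h1 : |grad (f n) e ω| ≤ 4 * d := hgradAll n ω e
      have h2 : (grad (f n) e ω) ^ 2 ≤ (4 * (d : ℝ)) ^ 2 := by
        rw [← sq_abs]
        exact pow_le_pow_left₀ (abs_nonneg _) h1 2
      have h4 : ind (ω ∉ H n) = 1 := by simp [ind, hω]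
      have h5 : (0 : ℝ) ≤ C ^ 2 / (n : ℝ) ^ (2 * d) := by positivity
      rw [h4]
      nlinarith
  -- L2 squared bound
  have hL2sq : ∀ e : E n, (L2 p (grad (f n) e)) ^ 2 ≤ B := by
    intro e
    have hnn : 0 ≤ ev p (fun ω => (grad (f n) e ω) ^ 2) :=
      ev_nonneg hp0 hp1 fun ω => sq_nonneg _
    have h0 : (L2 p (grad (f n) e)) ^ 2 = ev p (fun ω => (grad (f n) e ω) ^ 2) := by
      rw [L2, Real.sq_sqrt hnn]
    rw [h0]
    calc ev p (fun ω => (grad (f n) e ω) ^ 2)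
        ≤ ev p (fun ω => C ^ 2 / (n : ℝ) ^ (2 * d) + 16 * d ^ 2 * ind (ω ∉ H n)) :=
          ev_mono hp0 hp1 (hpt e)
      _ = C ^ 2 / (n : ℝ) ^ (2 * d) + 16 * d ^ 2 * ev p (fun ω => ind (ω ∉ H n)) :=
          ev_add_const_mul hp0 hp1 _ _ _
      _ ≤ B := by
          rw [hB]
          have := hHc n hn2
          nlinarith [this]
  -- each Talagrand term is at most B
  have hterm : ∀ e : E n, (L2 p (grad (f n) e)) ^ 2 /
      (1 + Real.log (L2 p (grad (f n) e) / L1 p (grad (f n) e))) ≤ B := by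
    intro e
    have hden : (1 : ℝ) ≤ 1 + Real.log (L2 p (grad (f n) e) / L1 p (grad (f n) e)) := by
      linarith [log_ratio_nonneg hp0 hp1 (grad (f n) e)]
    calc (L2 p (grad (f n) e)) ^ 2 /
          (1 + Real.log (L2 p (grad (f n) e) / L1 p (grad (f n) e)))
        ≤ (L2 p (grad (f n) e)) ^ 2 / 1 :=
          div_le_div_of_nonneg_left (sq_nonneg _) one_pos hden
      _ = (L2 p (grad (f n) e)) ^ 2 := div_one _
      _ ≤ B := hL2sq e
  -- sum bound
  have hsum : ∑ e : E n, (L2 p (grad (f n) e)) ^ 2 /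
      (1 + Real.log (L2 p (grad (f n) e) / L1 p (grad (f n) e))) ≤ (d : ℝ) * n ^ d * B := by
    calc ∑ e : E n, (L2 p (grad (f n) e)) ^ 2 /
          (1 + Real.log (L2 p (grad (f n) e) / L1 p (grad (f n) e)))
        ≤ ∑ _e : E n, B := Finset.sum_le_sum fun e _ => hterm e
      _ = (Fintype.card (E n) : ℝ) * B := by
          rw [Finset.sum_const, Finset.card_univ, nsmul_eq_mul]
      _ = (d : ℝ) * n ^ d * B := by rw [hcard n]; push_cast; ring
  have hVar : Var p (f n) ≤ K * d * (n : ℝ) ^ d * B := by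
    calc Var p (f n) ≤ K * ∑ e : E n, (L2 p (grad (f n) e)) ^ 2 /
          (1 + Real.log (L2 p (grad (f n) e) / L1 p (grad (f n) e))) := hTal n
      _ ≤ K * ((d : ℝ) * n ^ d * B) := mul_le_mul_of_nonneg_left hsum hK
      _ = K * d * (n : ℝ) ^ d * B := by ring
  refine ⟨hVar, ?_⟩
  -- exponential decay bound
  have hlogn : (0 : ℝ) < Real.log n := Real.log_pos (by linarith)
  have hlog_ge : (2 * d / c) ^ 2 ≤ Real.log n := by
    have h1 : Real.exp ((2 * d / c) ^ 2) ≤ (⌈Real.exp ((2 * d / c) ^ 2)⌉₊ : ℝ) :=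
      Nat.le_ceil _
    have h2 : ((⌈Real.exp ((2 * d / c) ^ 2)⌉₊ : ℕ) : ℝ) ≤ (n : ℝ) := by
      exact_mod_cast le_trans (Nat.le_add_right _ 2) hn
    calc (2 * d / c) ^ 2 = Real.log (Real.exp ((2 * d / c) ^ 2)) := (Real.log_exp _).symm
      _ ≤ Real.log n := Real.log_le_log (Real.exp_pos _) (le_trans h1 h2)
  have hexp_le : Real.exp (-c * (Real.log n) ^ ((3 : ℝ) / 2)) ≤ 1 / (n : ℝ) ^ (2 * d) := by
    have hx := hlogn
    have h32 : (Real.log n) ^ ((3 : ℝ) / 2) = Real.log n * Real.sqrt (Real.log n) := by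
      rw [show (3 : ℝ) / 2 = 1 + 1 / 2 by norm_num, Real.rpow_add hx, Real.rpow_one,
        Real.sqrt_eq_rpow]
    have hsq : 2 * (d : ℝ) / c ≤ Real.sqrt (Real.log n) := by
      have : Real.sqrt ((2 * d / c) ^ 2) ≤ Real.sqrt (Real.log n) :=
        Real.sqrt_le_sqrt hlog_ge
      rwa [Real.sqrt_sq (by positivity)] at this
    have hkey : 2 * (d : ℝ) * Real.log n ≤ c * (Real.log n) ^ ((3 : ℝ) / 2) := by
      rw [h32]
      have h1 : 2 * (d : ℝ) ≤ c * Real.sqrt (Real.log n) := by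
        rw [div_le_iff₀ hc] at hsq
        linarith [hsq]
      nlinarith [hx, h1]
    have h2 : Real.exp (-c * (Real.log n) ^ ((3 : ℝ) / 2)) ≤
        Real.exp (-(2 * (d : ℝ) * Real.log n)) := by
      apply Real.exp_le_exp.2
      linarith
    have h3 : Real.exp (-(2 * (d : ℝ) * Real.log n)) = 1 / (n : ℝ) ^ (2 * d) := by
      rw [Real.exp_neg,
        show (2 * (d : ℝ)) * Real.log n = ((2 * d : ℕ) : ℝ) * Real.log n by push_cast; ring,
        Real.exp_nat_mul, Real.exp_log hn0, one_div]
    linarith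
  -- conclude
  have hB_le : B ≤ (C ^ 2 + 16 * d ^ 2) / (n : ℝ) ^ (2 * d) := by
    rw [hB]
    have h1 : 16 * (d : ℝ) ^ 2 * Real.exp (-c * (Real.log n) ^ ((3 : ℝ) / 2)) ≤
        16 * (d : ℝ) ^ 2 * (1 / (n : ℝ) ^ (2 * d)) := by
      apply mul_le_mul_of_nonneg_left hexp_le (by positivity)
    have h2 : C ^ 2 / (n : ℝ) ^ (2 * d) + 16 * (d : ℝ) ^ 2 * (1 / (n : ℝ) ^ (2 * d)) =
        (C ^ 2 + 16 * d ^ 2) / (n : ℝ) ^ (2 * d) := by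
      field_simp
    linarith
  have hfinal : K * d * (n : ℝ) ^ d * B ≤
      (K * d * (C ^ 2 + 16 * d ^ 2) + 1) / (n : ℝ) ^ d := by
    have h1 : K * d * (n : ℝ) ^ d * B ≤
        K * d * (n : ℝ) ^ d * ((C ^ 2 + 16 * d ^ 2) / (n : ℝ) ^ (2 * d)) := by
      apply mul_le_mul_of_nonneg_left hB_le (by positivity)
    have h2 : K * d * (n : ℝ) ^ d * ((C ^ 2 + 16 * d ^ 2) / (n : ℝ) ^ (2 * d)) =
        K * d * (C ^ 2 + 16 * d ^ 2) / (n : ℝ) ^ d := by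
      rw [two_mul, pow_add]
      field_simp
    have h3 : K * d * (C ^ 2 + 16 * d ^ 2) / (n : ℝ) ^ d ≤
        (K * d * (C ^ 2 + 16 * d ^ 2) + 1) / (n : ℝ) ^ d := by
      gcongr
      linarith
    linarith
  exact le_trans hVar hfinal
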